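/- arXiv:2503.16209 — 3 statements merged into one kernel-verified Lean document; each statement's English description precedes it below -/
import Mathlib

section
/- Let A ∈ ℂ^{m×N} and n ∈ ℕ with 2n ≤ N. If A satisfies the restricted isometry property of order 2n with constant δ := δ_{2n} < 1/3, then A satisfies the ℓ_2-robust null space property of order n with constants ρ = δ/(1−2δ) ∈ (0,1) and τ = √(1+δ)/(1−2δ) > 0; that is, for every v ∈ ℂ^N and every S ⊆ {1,…,N} with |S| ≤ n one has ‖v_S‖_{ℓ_2} ≤ ρ n^{−1/2} ‖v_{S^c}‖_{ℓ_1} + τ ‖Av‖_{ℓ_2}. -/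
open scoped BigOperators
open scoped Classical

/-- The `ℓ_p` norm of a finite complex vector. -/
noncomputable def lpNorm {ι : Type*} [Fintype ι] (p : ℝ) (v : ι → ℂ) : ℝ :=
  (∑ i, ‖v i‖ ^ p) ^ (1 / p)

/-- Number of nonzero entries of a vector. -/
noncomputable def sparsity {ι : Type*} [Fintype ι] (v : ι → ℂ) : ℕ :=
  (Finset.univ.filter fun i => v i ≠ 0).card

/-- `A` satisfies the restricted isometry property of order `n` with constant `δ`. -/
def HasRIP {m : ℕ} {ι : Type*} [Fintype ι] (A : Matrix (Fin m) ι ℂ) (n : ℕ) (δ : ℝ) : Prop :=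
  ∀ v : ι → ℂ, sparsity v ≤ n →
    (1 - δ) * lpNorm 2 v ^ 2 ≤ lpNorm 2 (A.mulVec v) ^ 2 ∧
      lpNorm 2 (A.mulVec v) ^ 2 ≤ (1 + δ) * lpNorm 2 v ^ 2

/-- `A` satisfies the `ℓ₂`-robust null space property of order `n`
with constants `ρ` and `τ`. -/
def HasNSP {m : ℕ} {ι : Type*} [Fintype ι] (A : Matrix (Fin m) ι ℂ) (n : ℕ) (ρ τ : ℝ) : Prop :=
  ∀ (v : ι → ℂ) (S : Finset ι), S.card ≤ n →
    lpNorm 2 (fun i => if i ∈ S then v i else 0) ≤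
      ρ * (n : ℝ) ^ (-(1 : ℝ) / 2) * lpNorm 1 (fun i => if i ∈ S then 0 else v i) +
        τ * lpNorm 2 (A.mulVec v)

/-!
Sort the entries of `v` by decreasing modulus and cut the index set into consecutive blocks
`S₀, S₁, …` of size `n`. Polarization turns the RIP of order `2n` into
`|Re ⟪A u, A w⟫| ≤ δ ‖u‖₂ ‖w‖₂` for disjointly supported `n`-sparse `u, w`, so expanding
`‖A v_{S₀}‖₂² = Re ⟪A v_{S₀}, A v⟫ - ∑_{k ≥ 1} Re ⟪A v_{S₀}, A v_{S_k}⟫` gives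
`(1 - δ) ‖v_{S₀}‖₂² ≤ √(1 + δ) ‖v_{S₀}‖₂ ‖A v‖₂ + δ ‖v_{S₀}‖₂ ∑_{k ≥ 1} ‖v_{S_k}‖₂`.
Every entry on `S_{k+1}` is at most the mean modulus on `S_k`, hence
`‖v_{S_{k+1}}‖₂ ≤ ‖v_{S_k}‖₁ / √n` and `∑_{k ≥ 1} ‖v_{S_k}‖₂ ≤ ‖v_{S₀}‖₂ + ‖v_{S₀ᶜ}‖₁ / √n`.
This proves the inequality for `S₀`, and among all `S` with `|S| ≤ n` the top block `S₀`
maximizes `‖v_S‖₂` and minimizes `‖v_{Sᶜ}‖₁`.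
-/

open Finset WithLp
open scoped Matrix

section Sums

variable {ι : Type*} {f : ι → ℝ} {s t : Finset ι}

lemma sum_le_sum_of_card_le_of_forall_le (hf : ∀ i, 0 ≤ f i) (hcard : #s ≤ #t)
    (h : ∀ i ∈ s, ∀ j ∈ t, f i ≤ f j) : ∑ i ∈ s, f i ≤ ∑ j ∈ t, f j := by
  rcases t.eq_empty_or_nonempty with rfl | ht
  · simp [card_eq_zero.mp (Nat.le_zero.mp hcard)]
  obtain ⟨j₀, hj₀, hmin⟩ := t.exists_min_image f ht
  calc ∑ i ∈ s, f i ≤ #s • f j₀ := sum_le_card_nsmul _ _ _ fun i hi => h i hi j₀ hj₀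
    _ ≤ #t • f j₀ := nsmul_le_nsmul_left (hf j₀) hcard
    _ ≤ ∑ j ∈ t, f j := card_nsmul_le_sum _ _ _ hmin

lemma sum_le_sum_of_card_le_of_forall_compl_le (hf : ∀ i, 0 ≤ f i)
    (hcard : #s ≤ #t) (h : ∀ i ∉ t, ∀ j ∈ t, f i ≤ f j) : ∑ i ∈ s, f i ≤ ∑ j ∈ t, f j := by
  have hsdiff : ∑ i ∈ s \ t, f i ≤ ∑ j ∈ t \ s, f j :=
    sum_le_sum_of_card_le_of_forall_le hf (card_sdiff_le_card_sdiff_iff.2 hcard)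
      fun i hi j hj => h i (mem_sdiff.1 hi).2 j (mem_sdiff.1 hj).1
  rw [← sum_inter_add_sum_sdiff s t, ← sum_inter_add_sum_sdiff t s, inter_comm]
  gcongr

lemma sum_sq_mul_card_le_sq_sum (hf : ∀ i, 0 ≤ f i) (hcard : #s ≤ #t)
    (h : ∀ i ∈ s, ∀ j ∈ t, f i ≤ f j) : (∑ i ∈ s, f i ^ 2) * #t ≤ (∑ j ∈ t, f j) ^ 2 := by
  rcases t.eq_empty_or_nonempty with rfl | ht
  · simp
  obtain ⟨j₀, hj₀, hmin⟩ := t.exists_min_image f ht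
  have hs : ∑ i ∈ s, f i ^ 2 ≤ #t * f j₀ ^ 2 :=
    calc ∑ i ∈ s, f i ^ 2 ≤ #s • f j₀ ^ 2 :=
          sum_le_card_nsmul _ _ _ fun i hi => pow_le_pow_left₀ (hf i) (h i hi j₀ hj₀) 2
      _ ≤ #t • f j₀ ^ 2 := nsmul_le_nsmul_left (sq_nonneg _) hcard
      _ = #t * f j₀ ^ 2 := nsmul_eq_mul _ _
  have ht : #t * f j₀ ≤ ∑ j ∈ t, f j := by
    simpa using card_nsmul_le_sum t f (f j₀) hmin
  calc (∑ i ∈ s, f i ^ 2) * #t ≤ (#t * f j₀ ^ 2) * #t := by gcongr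
    _ = (#t * f j₀) ^ 2 := by ring
    _ ≤ (∑ j ∈ t, f j) ^ 2 := by gcongr; exact mul_nonneg (Nat.cast_nonneg _) (hf j₀)

lemma sum_le_sqrt_mul_sqrt_sum_sq {n : ℕ} (hf : ∀ i, 0 ≤ f i) (hs : #s ≤ n) :
    ∑ i ∈ s, f i ≤ √n * √(∑ i ∈ s, f i ^ 2) := by
  rw [← Real.sqrt_mul (Nat.cast_nonneg n), Real.le_sqrt (sum_nonneg fun i _ => hf i) (by positivity)]
  calc (∑ i ∈ s, f i) ^ 2 ≤ #s * ∑ i ∈ s, f i ^ 2 := sq_sum_le_card_mul_sum_sq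
    _ ≤ n * ∑ i ∈ s, f i ^ 2 := by gcongr

end Sums

section Blocks

variable {ι : Type*} [Fintype ι]

-- `blk i = k` says that `i` lies in the `k`-th block `S_k` of a partition into blocks of size `n`
-- along which `g` decreases; only the last nonempty block may be smaller than `n`.
structure IsDecreasingBlocks (g : ι → ℝ) (n : ℕ) (blk : ι → ℕ) : Prop where
  card_le (k : ℕ) : #{i | blk i = k} ≤ n
  le_of_lt (i j : ι) : blk i < blk j → g j ≤ g i
  card_eq (i : ι) (k : ℕ) : k < blk i → #{j | blk j = k} = n

lemma card_filter_fin_div_eq {N n : ℕ} (hn : 0 < n) (k : ℕ) :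
    #{j : Fin N | (j : ℕ) / n = k} = min ((k + 1) * n) N - k * n := by
  rw [← Nat.card_Ico, ← card_map Fin.valEmbedding]
  congr 1
  ext j
  simp only [mem_map, mem_filter, mem_univ, true_and, Fin.valEmbedding_apply, mem_Ico,
    lt_min_iff]
  constructor
  · rintro ⟨a, rfl, rfl⟩
    exact ⟨Nat.div_mul_le_self _ _, add_one_mul (a / n : ℕ) n ▸ Nat.lt_div_mul_add hn, a.isLt⟩
  · rintro ⟨hlo, hhi, hj⟩
    exact ⟨⟨j, hj⟩, Nat.div_eq_of_lt_le hlo hhi, rfl⟩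

lemma exists_isDecreasingBlocks (g : ι → ℝ) {n : ℕ} (hn : 0 < n) :
    ∃ blk, IsDecreasingBlocks g n blk := by
  obtain ⟨r, hr⟩ : ∃ r : ι ≃ Fin (Fintype.card ι), ∀ i j, r i ≤ r j → g j ≤ g i := by
    let e := Fintype.equivFin ι
    refine ⟨e.trans (Tuple.sort fun j => -g (e.symm j)).symm, fun i j hij => ?_⟩
    simpa using Tuple.monotone_sort (fun j => -g (e.symm j)) hij
  have hcard (k : ℕ) :
      #{i | (r i : ℕ) / n = k} = min ((k + 1) * n) (Fintype.card ι) - k * n := by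
    rw [← card_filter_fin_div_eq hn]
    exact card_equiv r (by simp)
  refine ⟨fun i => r i / n, fun k => ?_, fun i j h => hr i j ?_, fun i k hk => ?_⟩
  · rw [hcard, add_one_mul]
    omega
  · by_contra! hji
    exact h.not_ge (Nat.div_le_div_right hji.le)
  · have hki : (k + 1) * n ≤ r i := (Nat.le_div_iff_mul_le hn).1 hk
    rw [hcard, min_eq_left (hki.trans (r i).isLt.le), add_one_mul, Nat.add_sub_cancel_left]

namespace IsDecreasingBlocks

variable {g : ι → ℝ} {n : ℕ} {blk : ι → ℕ}

lemma sq (hg : ∀ i, 0 ≤ g i) (hb : IsDecreasingBlocks g n blk) :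
    IsDecreasingBlocks (fun i => g i ^ 2) n blk :=
  ⟨hb.card_le, fun i j h => pow_le_pow_left₀ (hg _) (hb.le_of_lt i j h) 2, hb.card_eq⟩

lemma card_le_card_zero (hb : IsDecreasingBlocks g n blk) {S : Finset ι} (hS : #S ≤ n) :
    #S ≤ #{i | blk i = 0} := by
  by_cases h : ∀ i, blk i = 0
  · rw [filter_true_of_mem fun i _ => h i]
    exact card_le_univ S
  · obtain ⟨i, hi⟩ := not_forall.1 h
    rwa [hb.card_eq i 0 (Nat.pos_of_ne_zero hi)]

lemma sum_le_sum_zero (hg : ∀ i, 0 ≤ g i) (hb : IsDecreasingBlocks g n blk) {S : Finset ι}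
    (hS : #S ≤ n) : ∑ i ∈ S, g i ≤ ∑ i with blk i = 0, g i :=
  sum_le_sum_of_card_le_of_forall_compl_le hg (hb.card_le_card_zero hS) fun i hi j hj =>
    hb.le_of_lt j i (by simp only [mem_filter, mem_univ, true_and] at hi hj; omega)

lemma sqrt_mul_sqrt_sum_sq_succ_le (hg : ∀ i, 0 ≤ g i) (hb : IsDecreasingBlocks g n blk)
    (k : ℕ) : √n * √(∑ i with blk i = k + 1, g i ^ 2) ≤ ∑ i with blk i = k, g i := by
  rcases ({i | blk i = k + 1} : Finset ι).eq_empty_or_nonempty with h | ⟨i, hi⟩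
  · rw [h, sum_empty, Real.sqrt_zero, mul_zero]
    exact sum_nonneg fun i _ => hg i
  have hfull : #{j | blk j = k} = n := hb.card_eq i k (by simp only [mem_filter] at hi; omega)
  have key : (∑ i with blk i = k + 1, g i ^ 2) * n ≤ (∑ i with blk i = k, g i) ^ 2 := by
    rw [← hfull]
    exact sum_sq_mul_card_le_sq_sum hg ((hb.card_le (k + 1)).trans hfull.ge) fun a ha b hb' =>
      hb.le_of_lt b a (by simp only [mem_filter, mem_univ, true_and] at ha hb'; omega)
  rw [← Real.sqrt_mul (Nat.cast_nonneg n), Real.sqrt_le_left (sum_nonneg fun i _ => hg i),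
    mul_comm]
  exact key

lemma sqrt_mul_sum_le (hg : ∀ i, 0 ≤ g i) (hb : IsDecreasingBlocks g n blk) {K : ℕ}
    (hK : ∀ i, blk i ≤ K) :
    √n * ∑ k ∈ range K, √(∑ i with blk i = k + 1, g i ^ 2) ≤
      √n * √(∑ i with blk i = 0, g i ^ 2) + ∑ i with blk i ≠ 0, g i := by
  have hB₀ : ∑ i with blk i = 0, g i ≤ √n * √(∑ i with blk i = 0, g i ^ 2) :=
    sum_le_sqrt_mul_sqrt_sum_sq hg (hb.card_le 0)
  calc √n * ∑ k ∈ range K, √(∑ i with blk i = k + 1, g i ^ 2)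
      ≤ ∑ k ∈ range K, ∑ i with blk i = k, g i := by
        rw [mul_sum]
        exact sum_le_sum fun k _ => hb.sqrt_mul_sqrt_sum_sq_succ_le hg k
    _ ≤ ∑ k ∈ range (K + 1), ∑ i with blk i = k, g i := by
        rw [sum_range_succ]
        exact le_add_of_nonneg_right (sum_nonneg fun i _ => hg i)
    _ = ∑ i with blk i = 0, g i + ∑ i with blk i ≠ 0, g i := by
        rw [sum_filter_add_sum_filter_not,
          sum_fiberwise_of_maps_to fun i _ => mem_range.2 (Nat.lt_succ_of_le (hK i))]
    _ ≤ _ := by gcongr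

end IsDecreasingBlocks

end Blocks

section RIP

variable {ι : Type*} [Fintype ι]

lemma lpNorm_two_eq_norm (v : ι → ℂ) : lpNorm 2 v = ‖toLp 2 v‖ := by
  rw [lpNorm, EuclideanSpace.norm_eq, Real.sqrt_eq_rpow]
  norm_num

lemma lpNorm_one_eq_sum (v : ι → ℂ) : lpNorm 1 v = ∑ i, ‖v i‖ := by
  simp [lpNorm]

lemma norm_toLp_indicator (S : Finset ι) (v : ι → ℂ) :
    ‖toLp 2 ((S : Set ι).indicator v)‖ = √(∑ i ∈ S, ‖v i‖ ^ 2) := by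
  rw [EuclideanSpace.norm_eq]
  simp [Set.indicator_apply, apply_ite]

lemma sparsity_le_add {u w x : ι → ℂ} (h : ∀ i, u i = 0 → w i = 0 → x i = 0) :
    sparsity x ≤ sparsity u + sparsity w :=
  (card_le_card fun _ => by simp only [mem_filter, mem_union, mem_univ, true_and]; tauto).trans
    (card_union_le _ _)

lemma sparsity_le {u x : ι → ℂ} (h : ∀ i, u i = 0 → x i = 0) : sparsity x ≤ sparsity u :=
  card_le_card fun _ => by simp only [mem_filter, mem_univ, true_and]; tauto

lemma sparsity_indicator_le (S : Finset ι) (v : ι → ℂ) :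
    sparsity ((S : Set ι).indicator v) ≤ #S :=
  card_le_card fun _ hi => Set.mem_of_indicator_ne_zero (mem_filter.1 hi).2

lemma inner_toLp_eq_zero_of_disjoint {u w : ι → ℂ} (h : ∀ i, u i = 0 ∨ w i = 0) :
    inner ℂ (toLp 2 u) (toLp 2 w) = 0 := by
  rw [PiLp.inner_apply]
  refine sum_eq_zero fun i _ => ?_
  rcases h i with h | h <;> simp [h]

variable {m n : ℕ} {A : Matrix (Fin m) ι ℂ} {δ : ℝ}

lemma HasRIP.norm_sq_bounds (hA : HasRIP A n δ) {v : ι → ℂ} (hv : sparsity v ≤ n) :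
    (1 - δ) * ‖toLp 2 v‖ ^ 2 ≤ ‖toLp 2 (A *ᵥ v)‖ ^ 2 ∧
      ‖toLp 2 (A *ᵥ v)‖ ^ 2 ≤ (1 + δ) * ‖toLp 2 v‖ ^ 2 := by
  simpa only [lpNorm_two_eq_norm] using hA v hv

lemma HasRIP.abs_re_inner_le_half (hA : HasRIP A n δ) {u w : ι → ℂ}
    (hsp : sparsity u + sparsity w ≤ n) (hdisj : ∀ i, u i = 0 ∨ w i = 0) :
    |RCLike.re (inner ℂ (toLp 2 (A *ᵥ u)) (toLp 2 (A *ᵥ w)))| ≤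
      δ / 2 * (‖toLp 2 u‖ ^ 2 + ‖toLp 2 w‖ ^ 2) := by
  have h0 := inner_toLp_eq_zero_of_disjoint hdisj
  have hadd := hA.norm_sq_bounds
    ((sparsity_le_add (x := u + w) fun i hu hw => by simp [hu, hw]).trans hsp)
  have hsub := hA.norm_sq_bounds
    ((sparsity_le_add (x := u - w) fun i hu hw => by simp [hu, hw]).trans hsp)
  rw [Matrix.mulVec_add, toLp_add, toLp_add, norm_add_sq (𝕜 := ℂ), norm_add_sq (𝕜 := ℂ), h0,
    map_zero] at hadd
  rw [Matrix.mulVec_sub, toLp_sub, toLp_sub, norm_sub_sq (𝕜 := ℂ), norm_sub_sq (𝕜 := ℂ), h0,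
    map_zero] at hsub
  rw [abs_le]
  constructor <;> linarith [hadd.1, hadd.2, hsub.1, hsub.2]

lemma HasRIP.abs_re_inner_le (hA : HasRIP A n δ) {u w : ι → ℂ}
    (hsp : sparsity u + sparsity w ≤ n) (hdisj : ∀ i, u i = 0 ∨ w i = 0) :
    |RCLike.re (inner ℂ (toLp 2 (A *ᵥ u)) (toLp 2 (A *ᵥ w)))| ≤
      δ * ‖toLp 2 u‖ * ‖toLp 2 w‖ := by
  rcases eq_or_ne u 0 with rfl | hu
  · simp
  rcases eq_or_ne w 0 with rfl | hw
  · simp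
  have hu' : 0 < ‖toLp 2 u‖ := by simpa using hu
  have hw' : 0 < ‖toLp 2 w‖ := by simpa using hw
  -- rescaling `u, w` to norm `‖u‖ ‖w‖` turns the bound `δ / 2 * (‖u‖² + ‖w‖²)` into `δ ‖u‖ ‖w‖`
  have key := hA.abs_re_inner_le_half (u := (‖toLp 2 w‖ : ℂ) • u) (w := (‖toLp 2 u‖ : ℂ) • w)
    ((add_le_add (sparsity_le fun i h => by simp [h]) (sparsity_le fun i h => by simp [h])).trans
      hsp) fun i => by rcases hdisj i with h | h <;> simp [h]
  simp only [Matrix.mulVec_smul, toLp_smul, inner_smul_left, inner_smul_right, Complex.conj_ofReal,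
    RCLike.re_to_complex, Complex.re_ofReal_mul, norm_smul, Complex.norm_real, norm_norm, abs_mul,
    abs_norm] at key
  rw [RCLike.re_to_complex]
  refine le_of_mul_le_mul_left ?_ (mul_pos hu' hw')
  nlinarith [key]

lemma HasRIP.norm_sq_le_of_disjoint {κ : Type*} (hA : HasRIP A n δ) (u : ι → ℂ)
    (s : Finset κ) (w : κ → ι → ℂ) (hsp : ∀ k ∈ s, sparsity u + sparsity (w k) ≤ n)
    (hdisj : ∀ k ∈ s, ∀ i, u i = 0 ∨ w k i = 0) :
    ‖toLp 2 (A *ᵥ u)‖ ^ 2 ≤ ‖toLp 2 (A *ᵥ u)‖ * ‖toLp 2 (A *ᵥ (u + ∑ k ∈ s, w k))‖ +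
      δ * ‖toLp 2 u‖ * ∑ k ∈ s, ‖toLp 2 (w k)‖ := by
  set a : EuclideanSpace ℂ (Fin m) := toLp 2 (A *ᵥ u)
  have hexp : RCLike.re (inner ℂ a (toLp 2 (A *ᵥ (u + ∑ k ∈ s, w k)))) =
      ‖a‖ ^ 2 + ∑ k ∈ s, RCLike.re (inner ℂ a (toLp 2 (A *ᵥ w k))) := by
    rw [Matrix.mulVec_add, Matrix.mulVec_sum, toLp_add, toLp_sum, inner_add_right, inner_sum,
      map_add, map_sum, inner_self_eq_norm_sq]
  have hcross : -∑ k ∈ s, RCLike.re (inner ℂ a (toLp 2 (A *ᵥ w k))) ≤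
      δ * ‖toLp 2 u‖ * ∑ k ∈ s, ‖toLp 2 (w k)‖ := by
    rw [← sum_neg_distrib, mul_sum]
    exact sum_le_sum fun k hk => (neg_le_abs _).trans (hA.abs_re_inner_le (hsp k hk) (hdisj k hk))
  linarith [re_inner_le_norm (𝕜 := ℂ) a (toLp 2 (A *ᵥ (u + ∑ k ∈ s, w k)))]

end RIP

-- With `L = ‖v_{S₀}‖₂`, `a = ‖A v_{S₀}‖₂`, `y = ‖A v‖₂`, `T = ∑_{k ≥ 1} ‖v_{S_k}‖₂` and
-- `W = ‖v_{S₀ᶜ}‖₁ / √n`, this is where the constants `ρ` and `τ` come from.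
lemma one_sub_two_mul_le_of_sq_le {δ L a y T W : ℝ} (hδ : 0 ≤ δ) (hL : 0 ≤ L) (ha : 0 ≤ a)
    (hy : 0 ≤ y) (hW : 0 ≤ W) (hlow : (1 - δ) * L ^ 2 ≤ a ^ 2) (hupp : a ^ 2 ≤ (1 + δ) * L ^ 2)
    (hcross : a ^ 2 ≤ a * y + δ * L * T) (hT : T ≤ L + W) :
    (1 - 2 * δ) * L ≤ δ * W + √(1 + δ) * y := by
  have ha' : a ≤ √(1 + δ) * L := by
    rw [← pow_le_pow_iff_left₀ ha (by positivity) two_ne_zero, mul_pow,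
      Real.sq_sqrt (by linarith)]
    exact hupp
  have key : L * ((1 - 2 * δ) * L) ≤ L * (δ * W + √(1 + δ) * y) :=
    calc L * ((1 - 2 * δ) * L) = (1 - δ) * L ^ 2 - δ * L ^ 2 := by ring
      _ ≤ a * y + δ * L * T - δ * L ^ 2 := by linarith
      _ ≤ √(1 + δ) * L * y + δ * L * (L + W) - δ * L ^ 2 := by gcongr
      _ = L * (δ * W + √(1 + δ) * y) := by ring
  rcases hL.eq_or_lt with rfl | hL
  · rw [mul_zero]
    positivity
  · exact le_of_mul_le_mul_left key hL

section NullSpaceProperty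

variable {ι : Type*} [Fintype ι] {m n : ℕ} {A : Matrix (Fin m) ι ℂ} {δ : ℝ}

lemma HasRIP.one_sub_two_mul_sqrt_sum_sq_block_zero_le (hA : HasRIP A (2 * n) δ) (hδ : 0 ≤ δ)
    (hn : 0 < n) {v : ι → ℂ} {blk : ι → ℕ} (hb : IsDecreasingBlocks (‖v ·‖) n blk) :
    (1 - 2 * δ) * √(∑ i with blk i = 0, ‖v i‖ ^ 2) ≤
      δ / √n * ∑ i with blk i ≠ 0, ‖v i‖ + √(1 + δ) * ‖toLp 2 (A *ᵥ v)‖ := by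
  let vb (k : ℕ) : ι → ℂ := (({i | blk i = k} : Finset ι) : Set ι).indicator v
  have hnorm (k : ℕ) : ‖toLp 2 (vb k)‖ = √(∑ i with blk i = k, ‖v i‖ ^ 2) :=
    norm_toLp_indicator _ v
  have hsp (k : ℕ) : sparsity (vb k) ≤ n := (sparsity_indicator_le _ v).trans (hb.card_le k)
  have hv : v = vb 0 + ∑ k ∈ range (univ.sup blk), vb (k + 1) := by
    rw [add_comm, ← sum_range_succ' vb]
    ext i
    simp only [coe_filter, mem_univ, true_and, Finset.sum_apply, Set.indicator_apply,
      Set.mem_ofPred_eq, sum_ite_eq, mem_range, Order.lt_add_one_iff, left_eq_ite_iff, not_le, vb]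
    exact fun h => absurd (le_sup (mem_univ i)) h.not_ge
  have hcross := hA.norm_sq_le_of_disjoint (vb 0) (range (univ.sup blk)) (fun k => vb (k + 1))
    (fun k _ => by have := hsp 0; have := hsp (k + 1); omega) fun k _ i => by
      rcases Nat.eq_zero_or_pos (blk i) with h | h
      · right; simp [vb, h]
      · left; simp [vb, h.ne']
  rw [← hv] at hcross
  have htail : ∑ k ∈ range (univ.sup blk), ‖toLp 2 (vb (k + 1))‖ ≤
      ‖toLp 2 (vb 0)‖ + (∑ i with blk i ≠ 0, ‖v i‖) / √n := by
    have := hb.sqrt_mul_sum_le (fun i => norm_nonneg _) fun i => le_sup (mem_univ i)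
    have hs : 0 < √(n : ℝ) := Real.sqrt_pos.2 (Nat.cast_pos.2 hn)
    simp_rw [hnorm]
    refine le_of_mul_le_mul_left ?_ hs
    rwa [mul_add, mul_div_cancel₀ _ hs.ne']
  obtain ⟨hlow, hupp⟩ := hA.norm_sq_bounds ((hsp 0).trans (by omega))
  rw [← hnorm 0]
  calc (1 - 2 * δ) * ‖toLp 2 (vb 0)‖
      ≤ δ * ((∑ i with blk i ≠ 0, ‖v i‖) / √n) + √(1 + δ) * ‖toLp 2 (A *ᵥ v)‖ :=
        one_sub_two_mul_le_of_sq_le hδ (norm_nonneg _) (norm_nonneg _) (norm_nonneg _)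
          (by positivity) hlow hupp hcross htail
    _ = δ / √n * ∑ i with blk i ≠ 0, ‖v i‖ + √(1 + δ) * ‖toLp 2 (A *ᵥ v)‖ := by ring

theorem HasRIP.one_sub_two_mul_norm_indicator_le (hA : HasRIP A (2 * n) δ) (hδ : 0 ≤ δ)
    (v : ι → ℂ) {S : Finset ι} (hS : #S ≤ n) :
    (1 - 2 * δ) * ‖toLp 2 ((S : Set ι).indicator v)‖ ≤
      δ / √n * ∑ i ∈ Sᶜ, ‖v i‖ + √(1 + δ) * ‖toLp 2 (A *ᵥ v)‖ := by
  have hg (i : ι) : 0 ≤ ‖v i‖ := norm_nonneg _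
  have hrhs : 0 ≤ δ / √n * ∑ i ∈ Sᶜ, ‖v i‖ + √(1 + δ) * ‖toLp 2 (A *ᵥ v)‖ := by positivity
  rcases Nat.eq_zero_or_pos n with rfl | hn
  · obtain rfl : S = ∅ := card_eq_zero.1 (Nat.le_zero.1 hS)
    rwa [coe_empty, Set.indicator_empty', toLp_zero, norm_zero, mul_zero]
  rcases lt_or_ge (1 - 2 * δ) 0 with hneg | hpos
  · exact (mul_nonpos_of_nonpos_of_nonneg hneg.le (norm_nonneg _)).trans hrhs
  obtain ⟨blk, hb⟩ := exists_isDecreasingBlocks (‖v ·‖) hn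
  have hL : ‖toLp 2 ((S : Set ι).indicator v)‖ ≤ √(∑ i with blk i = 0, ‖v i‖ ^ 2) := by
    rw [norm_toLp_indicator]
    exact Real.sqrt_le_sqrt ((hb.sq hg).sum_le_sum_zero (fun i => sq_nonneg _) hS)
  have hW : ∑ i with blk i ≠ 0, ‖v i‖ ≤ ∑ i ∈ Sᶜ, ‖v i‖ := by
    have := hb.sum_le_sum_zero hg hS
    have := sum_add_sum_compl S (‖v ·‖)
    have := sum_filter_add_sum_filter_not univ (blk · = 0) (‖v ·‖)
    linarith
  calc (1 - 2 * δ) * ‖toLp 2 ((S : Set ι).indicator v)‖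
      ≤ (1 - 2 * δ) * √(∑ i with blk i = 0, ‖v i‖ ^ 2) := by gcongr
    _ ≤ δ / √n * ∑ i with blk i ≠ 0, ‖v i‖ + √(1 + δ) * ‖toLp 2 (A *ᵥ v)‖ :=
      hA.one_sub_two_mul_sqrt_sum_sq_block_zero_le hδ hn hb
    _ ≤ δ / √n * ∑ i ∈ Sᶜ, ‖v i‖ + √(1 + δ) * ‖toLp 2 (A *ᵥ v)‖ := by gcongr

theorem HasRIP.hasNSP (hA : HasRIP A (2 * n) δ) (hδ : 0 ≤ δ) (hδ₁ : 2 * δ < 1) :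
    HasNSP A n (δ / (1 - 2 * δ)) (√(1 + δ) / (1 - 2 * δ)) := by
  intro v S hS
  have hS₁ : (fun i => if i ∈ S then v i else 0) = (S : Set ι).indicator v := by
    ext i
    simp [Set.indicator_apply]
  have hS₂ : lpNorm 1 (fun i => if i ∈ S then 0 else v i) = ∑ i ∈ Sᶜ, ‖v i‖ := by
    rw [lpNorm_one_eq_sum]
    simp [apply_ite, sum_ite, filter_not, compl_eq_univ_sdiff]
  have hpow : (n : ℝ) ^ (-(1 : ℝ) / 2) = (√n)⁻¹ := by
    rw [neg_div, Real.rpow_neg (Nat.cast_nonneg n), Real.sqrt_eq_rpow]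
  have hc : 0 < 1 - 2 * δ := by linarith
  rw [hS₁, lpNorm_two_eq_norm, lpNorm_two_eq_norm, hS₂, hpow]
  calc ‖toLp 2 ((S : Set ι).indicator v)‖
      = (1 - 2 * δ) * ‖toLp 2 ((S : Set ι).indicator v)‖ / (1 - 2 * δ) := by field_simp
    _ ≤ (δ / √n * ∑ i ∈ Sᶜ, ‖v i‖ + √(1 + δ) * ‖toLp 2 (A *ᵥ v)‖) / (1 - 2 * δ) := by
      gcongr
      exact hA.one_sub_two_mul_norm_indicator_le hδ v hS
    _ = _ := by ring

end NullSpaceProperty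

theorem stmt0_general {m N n : ℕ} (A : Matrix (Fin m) (Fin N) ℂ)
    (δ : ℝ) (hδ0 : 0 < δ) (hδ : δ < 1 / 3) (hRIP : HasRIP A (2 * n) δ) :
    δ / (1 - 2 * δ) ∈ Set.Ioo (0 : ℝ) 1 ∧ 0 < Real.sqrt (1 + δ) / (1 - 2 * δ) ∧
      HasNSP A n (δ / (1 - 2 * δ)) (Real.sqrt (1 + δ) / (1 - 2 * δ)) := by
  have hc : 0 < 1 - 2 * δ := by linarith
  exact ⟨⟨div_pos hδ0 hc, (div_lt_one hc).2 (by linarith)⟩,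
    div_pos (Real.sqrt_pos.2 (by linarith)) hc, hRIP.hasNSP hδ0.le (by linarith)⟩

/-- **RIP implies ℓ₂-robust NSP.**  If `A ∈ ℂ^{m×N}` satisfies the RIP of order `2n`
with constant `δ < 1/3`, then `A` satisfies the `ℓ₂`-robust NSP of order `n`
with constants `ρ = δ/(1−2δ) ∈ (0,1)` and `τ = √(1+δ)/(1−2δ) > 0`. -/
theorem stmt0 {m N n : ℕ} (hn : 2 * n ≤ N) (A : Matrix (Fin m) (Fin N) ℂ)
    (δ : ℝ) (hδ0 : 0 < δ) (hδ : δ < 1 / 3) (hRIP : HasRIP A (2 * n) δ) :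
    δ / (1 - 2 * δ) ∈ Set.Ioo (0 : ℝ) 1 ∧ 0 < Real.sqrt (1 + δ) / (1 - 2 * δ) ∧
      HasNSP A n (δ / (1 - 2 * δ)) (Real.sqrt (1 + δ) / (1 - 2 * δ)) :=
  stmt0_general A δ hδ0 hδ hRIP
end

section
/- Let q ≥ p ≥ 1, let A ∈ ℂ^{m×N}, and suppose there exists Δ : ℂ^m → ℂ^N such that (A,Δ) is (q,p)–n–instance-optimal with constant C_N. Then every z ∈ ker(A) satisfies ‖z‖_{ℓ_q} ≤ C_N · n^{1/q−1/p} · σ_{2n}(z)_{ℓ_p}. -/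
open scoped BigOperators
open scoped Classical

/-- Best `n`-term approximation error of `v` in `ℓ_p`. -/
noncomputable def bestApprox {ι : Type*} [Fintype ι] (n : ℕ) (p : ℝ) (v : ι → ℂ) : ℝ :=
  sInf {t : ℝ | ∃ z : ι → ℂ, sparsity z ≤ n ∧ t = lpNorm p (v - z)}

/-- `(A, Δ)` is `(q,p)`–`n`–instance-optimal with constant `C`. -/
def InstOpt {m N : ℕ} (A : Matrix (Fin m) (Fin N) ℂ) (Δ : (Fin m → ℂ) → Fin N → ℂ)
    (q p : ℝ) (n : ℕ) (C : ℝ) : Prop :=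
  ∀ z : Fin N → ℂ,
    lpNorm q (z - Δ (A.mulVec z)) ≤ C * (n : ℝ) ^ (1 / q - 1 / p) * bestApprox n p z

/-!
Instance optimality forces `Δ` to decode every `n`-sparse vector exactly. Split a `2n`-sparse `y`
as `y₁ + y₂` with both parts `n`-sparse. For `z ∈ ker A`, `z - y₁` has the same measurement as
`-y₁`, so `Δ` returns `-y₁` on it, and instance optimality at `z - y₁` reads
`‖z‖_q ≤ C n^{1/q-1/p} σ_n(z - y₁)_p ≤ C n^{1/q-1/p} ‖z - y‖_p`; take the infimum over `y`.
-/

section Sparse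

variable {ι : Type*} [Fintype ι]

lemma lpNorm_nonneg (p : ℝ) (v : ι → ℂ) : 0 ≤ lpNorm p v :=
  Real.rpow_nonneg (Finset.sum_nonneg fun _ _ => Real.rpow_nonneg (norm_nonneg _) _) _

lemma lpNorm_zero {p : ℝ} (hp : p ≠ 0) : lpNorm p (0 : ι → ℂ) = 0 := by
  simp [lpNorm, Real.zero_rpow hp, Real.zero_rpow (inv_ne_zero hp)]

lemma lpNorm_eq_zero_iff {p : ℝ} (hp : 0 < p) {v : ι → ℂ} : lpNorm p v = 0 ↔ v = 0 := by
  have hterm : ∀ i, 0 ≤ ‖v i‖ ^ p := fun i => Real.rpow_nonneg (norm_nonneg _) p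
  simp only [lpNorm, Real.rpow_eq_zero (Finset.sum_nonneg fun i _ => hterm i)
      (one_div_ne_zero hp.ne'), Finset.sum_eq_zero_iff_of_nonneg fun i _ => hterm i,
    Finset.mem_univ, true_implies, Real.rpow_eq_zero (norm_nonneg _) hp.ne', norm_eq_zero,
    funext_iff, Pi.zero_apply]

lemma sparsity_le_card {v : ι → ℂ} {S : Finset ι} (h : ∀ i, v i ≠ 0 → i ∈ S) :
    sparsity v ≤ S.card :=
  Finset.card_le_card fun i hi => h i (Finset.mem_filter.mp hi).2

@[simp]
lemma sparsity_zero : sparsity (0 : ι → ℂ) = 0 := by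
  simp [sparsity]

@[simp]
lemma sparsity_neg (v : ι → ℂ) : sparsity (-v) = sparsity v := by
  simp [sparsity]

lemma exists_add_eq_of_sparsity_le_add {v : ι → ℂ} {k l : ℕ} (hv : sparsity v ≤ k + l) :
    ∃ v₁ v₂ : ι → ℂ, sparsity v₁ ≤ k ∧ sparsity v₂ ≤ l ∧ v₁ + v₂ = v := by
  set S := Finset.univ.filter fun i => v i ≠ 0
  have hS : ∀ i, v i ≠ 0 → i ∈ S := fun i hi => Finset.mem_filter.mpr ⟨Finset.mem_univ i, hi⟩
  obtain ⟨T, hTS, hTcard⟩ := Finset.exists_subset_card_eq (min_le_left S.card k)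
  refine ⟨fun i => if i ∈ T then v i else 0, fun i => if i ∈ T then 0 else v i, ?_, ?_, ?_⟩
  · refine (sparsity_le_card (S := T) fun i hi => ?_).trans (hTcard ▸ min_le_right _ _)
    by_contra hiT
    simp [hiT] at hi
  · refine (sparsity_le_card (S := S \ T) fun i hi => ?_).trans ?_
    · by_cases hiT : i ∈ T
      · simp [hiT] at hi
      · simp only [hiT, if_false] at hi
        exact Finset.mem_sdiff.mpr ⟨hS i hi, hiT⟩
    · rw [Finset.card_sdiff_of_subset hTS, hTcard]
      change S.card ≤ k + l at hv
      omega
  · funext i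
    by_cases hiT : i ∈ T <;> simp [hiT]

lemma bestApprox_nonneg (n : ℕ) (p : ℝ) (v : ι → ℂ) : 0 ≤ bestApprox n p v :=
  Real.sInf_nonneg <| by
    rintro t ⟨y, -, rfl⟩
    exact lpNorm_nonneg _ _

lemma bestApprox_le {n : ℕ} (p : ℝ) (v : ι → ℂ) {y : ι → ℂ} (hy : sparsity y ≤ n) :
    bestApprox n p v ≤ lpNorm p (v - y) :=
  csInf_le ⟨0, by rintro t ⟨w, -, rfl⟩; exact lpNorm_nonneg _ _⟩ ⟨y, hy, rfl⟩

lemma bestApprox_eq_zero_of_sparsity_le {n : ℕ} {p : ℝ} (hp : p ≠ 0) {v : ι → ℂ}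
    (hv : sparsity v ≤ n) : bestApprox n p v = 0 :=
  le_antisymm (by simpa [lpNorm_zero hp] using bestApprox_le p v hv) (bestApprox_nonneg n p v)

lemma le_mul_bestApprox {n : ℕ} {p a c : ℝ} {v : ι → ℂ} (hc : 0 < c)
    (h : ∀ y : ι → ℂ, sparsity y ≤ n → a ≤ c * lpNorm p (v - y)) :
    a ≤ c * bestApprox n p v := by
  rw [← div_le_iff₀' hc]
  refine le_csInf ⟨_, 0, by simp, rfl⟩ ?_
  rintro t ⟨y, hy, rfl⟩
  exact (div_le_iff₀' hc).mpr (h y hy)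

lemma exists_bestApprox_sub_le {k l : ℕ} (p : ℝ) (v : ι → ℂ) {y : ι → ℂ}
    (hy : sparsity y ≤ k + l) :
    ∃ y₁ : ι → ℂ, sparsity y₁ ≤ k ∧ bestApprox l p (v - y₁) ≤ lpNorm p (v - y) := by
  obtain ⟨y₁, y₂, hy₁, hy₂, rfl⟩ := exists_add_eq_of_sparsity_le_add hy
  exact ⟨y₁, hy₁, by simpa [sub_sub] using bestApprox_le p (v - y₁) hy₂⟩

end Sparse

namespace InstOpt

variable {m N n : ℕ} {A : Matrix (Fin m) (Fin N) ℂ} {Δ : (Fin m → ℂ) → Fin N → ℂ} {p q C : ℝ}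

lemma apply_mulVec_of_sparsity_le (hΔ : InstOpt A Δ q p n C) (hp : p ≠ 0) (hq : 0 < q)
    {y : Fin N → ℂ} (hy : sparsity y ≤ n) : Δ (A.mulVec y) = y := by
  have h := hΔ y
  rw [bestApprox_eq_zero_of_sparsity_le hp hy, mul_zero] at h
  exact (sub_eq_zero.mp ((lpNorm_eq_zero_iff hq).mp (le_antisymm h (lpNorm_nonneg _ _)))).symm

lemma lpNorm_le_bestApprox_sub_of_mulVec_eq_zero (hΔ : InstOpt A Δ q p n C) (hp : p ≠ 0)
    (hq : 0 < q) {z y : Fin N → ℂ} (hz : A.mulVec z = 0) (hy : sparsity y ≤ n) :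
    lpNorm q z ≤ C * (n : ℝ) ^ (1 / q - 1 / p) * bestApprox n p (z - y) := by
  have hdec : Δ (A.mulVec (z - y)) = -y := by
    rw [Matrix.mulVec_sub, hz, zero_sub, ← Matrix.mulVec_neg]
    exact hΔ.apply_mulVec_of_sparsity_le hp hq (by rwa [sparsity_neg])
  simpa [hdec] using hΔ (z - y)

end InstOpt

theorem stmt7_general {m N : ℕ} (p q : ℝ) (hp : 1 ≤ p) (hpq : p ≤ q) (n : ℕ)
    (A : Matrix (Fin m) (Fin N) ℂ) (CN : ℝ)
    (h : ∃ Δ : (Fin m → ℂ) → Fin N → ℂ, InstOpt A Δ q p n CN) :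
    ∀ z : Fin N → ℂ, A.mulVec z = 0 →
      lpNorm q z ≤ CN * (n : ℝ) ^ (1 / q - 1 / p) * bestApprox (2 * n) p z := by
  intro z hz
  obtain ⟨Δ, hΔ⟩ := h
  have hp0 : p ≠ 0 := by positivity
  have hq0 : 0 < q := by linarith
  have hbound {y : Fin N → ℂ} (hy : sparsity y ≤ n) :=
    hΔ.lpNorm_le_bestApprox_sub_of_mulVec_eq_zero hp0 hq0 hz hy
  rcases le_or_gt (CN * (n : ℝ) ^ (1 / q - 1 / p)) 0 with hC | hC
  · have hz0 : z = 0 := (lpNorm_eq_zero_iff hq0).mp <| le_antisymm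
      ((sub_zero z ▸ hbound (by simp)).trans
        (mul_nonpos_of_nonpos_of_nonneg hC (bestApprox_nonneg _ _ _)))
      (lpNorm_nonneg _ _)
    rw [hz0, lpNorm_zero hq0.ne', bestApprox_eq_zero_of_sparsity_le hp0 (by simp), mul_zero]
  · refine le_mul_bestApprox hC fun y hy => ?_
    obtain ⟨y₁, hy₁, hle⟩ := exists_bestApprox_sub_le p z (k := n) (l := n) (two_mul n ▸ hy)
    exact (hbound hy₁).trans (mul_le_mul_of_nonneg_left hle hC.le)

/-- If `(A,Δ)` is `(q,p)`–`n`–instance-optimal with constant `C_N`, then every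
`z ∈ ker A` satisfies `‖z‖_q ≤ C_N n^{1/q−1/p} σ_{2n}(z)_p`. -/
theorem stmt7 {m N : ℕ} (p q : ℝ) (hp : 1 ≤ p) (hpq : p ≤ q) (n : ℕ) (hn : 0 < n)
    (A : Matrix (Fin m) (Fin N) ℂ) (CN : ℝ)
    (h : ∃ Δ : (Fin m → ℂ) → Fin N → ℂ, InstOpt A Δ q p n CN) :
    ∀ z : Fin N → ℂ, A.mulVec z = 0 →
      lpNorm q z ≤ CN * (n : ℝ) ^ (1 / q - 1 / p) * bestApprox (2 * n) p z :=
  stmt7_general p q hp hpq n A CN h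
end

section
/- Let n, N ∈ ℕ with n < N. Then there exists a family 𝒰 of subsets of {1,…,N} such that: (i) |S| = n for every S ∈ 𝒰; (ii) |S ∩ T| < n/2 for all distinct S, T ∈ 𝒰; and (iii) |𝒰| ≥ (N/(4n))^{n/2}. -/
/-!
Put `Fin n × Fin q` inside `Fin N`, where `q = ⌊N/n⌋`, and send a word `c : Fin n → Fin q` to
its graph `{(i, c i)}`, an `n`-set; two graphs meet exactly in the positions where the words
agree. So it suffices to find a `q`-ary code of length `n` with minimum Hamming distance
`> ⌊n/2⌋`. The greedy (Gilbert–Varshamov) argument gives one with at least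
`q^n / (2^n (q-1)^⌊n/2⌋)` words, because a Hamming ball of radius `d` has at most
`2^n (q-1)^d` points, and `(q+1)(q-1) ≤ q²` turns this into `((q+1)/4)^(n/2) ≥ (N/(4n))^(n/2)`.
When `q < 4` the bound is at most `1` and a single `n`-set suffices.
-/

open Finset

theorem exists_pairwise_not_rel_card_le_mul {α : Type*} (r : α → α → Prop) [DecidableRel r]
    [Std.Symm r] (s : Finset α) (hrefl : ∀ x ∈ s, r x x) (B : ℕ)
    (hB : ∀ x ∈ s, #{y ∈ s | r x y} ≤ B) :
    ∃ C ⊆ s, (C : Set α).Pairwise (fun x y => ¬ r x y) ∧ #s ≤ #C * B := by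
  classical
  induction s using Finset.strongInduction with
  | H s ih =>
    rcases s.eq_empty_or_nonempty with rfl | ⟨x, hx⟩
    · exact ⟨∅, by simp⟩
    set t := {y ∈ s | ¬ r x y}
    have hts : t ⊆ s := filter_subset _ _
    obtain ⟨C, hCt, hC, hcard⟩ := ih t (filter_ssubset.2 ⟨x, hx, not_not.2 (hrefl x hx)⟩)
      (fun y hy => hrefl y (hts hy)) fun y hy =>
        (card_le_card (filter_subset_filter _ hts)).trans (hB y (hts hy))
    have hxC : x ∉ C := fun hxC => (mem_filter.1 (hCt hxC)).2 (hrefl x hx)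
    refine ⟨insert x C, insert_subset hx (hCt.trans hts), ?_, ?_⟩
    · have hxy : ∀ y ∈ C, ¬ r x y := fun y hy => (mem_filter.1 (hCt hy)).2
      rw [coe_insert, Set.pairwise_insert]
      exact ⟨hC, fun y hy _ => ⟨hxy y hy, fun hyx => hxy y hy (Std.Symm.symm _ _ hyx)⟩⟩
    · calc #s = #{y ∈ s | r x y} + #t := (card_filter_add_card_filter_not _).symm
        _ ≤ B + #C * B := add_le_add (hB x hx) hcard
        _ = #(insert x C) * B := by rw [card_insert_of_notMem hxC]; ring

section Hamming

variable {ι β : Type*} [Fintype ι] [DecidableEq ι] [Fintype β] [DecidableEq β]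

theorem card_filter_forall_ne_iff_mem (c : ι → β) (J : Finset ι) :
    #{x : ι → β | ∀ i, x i ≠ c i ↔ i ∈ J} = (Fintype.card β - 1) ^ #J := by
  have : ({x | ∀ i, x i ≠ c i ↔ i ∈ J} : Finset (ι → β)) =
      Fintype.piFinset fun i => if i ∈ J then {c i}ᶜ else {c i} := by
    ext x
    simp only [mem_filter, mem_univ, true_and, Fintype.mem_piFinset]
    refine forall_congr' fun i => ?_
    by_cases hi : i ∈ J <;> simp [hi]
  rw [this, Fintype.card_piFinset]
  simp [apply_ite, card_compl, prod_ite_mem]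

theorem card_hammingBall_le [Nontrivial β] (c : ι → β) (d : ℕ) :
    #{x : ι → β | hammingDist x c ≤ d} ≤
      (Fintype.card β - 1) ^ d * 2 ^ Fintype.card ι := by
  let D : (ι → β) → Finset ι := fun x => {i | x i ≠ c i}
  have hq : 1 ≤ Fintype.card β - 1 := by have := Fintype.one_lt_card (α := β); omega
  calc #{x : ι → β | hammingDist x c ≤ d}
      ≤ (Fintype.card β - 1) ^ d * #(image D {x | hammingDist x c ≤ d}) := by
        refine card_le_mul_card_image _ _ fun J hJ => ?_
        obtain ⟨x, hx, rfl⟩ := mem_image.1 hJ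
        calc #{y ∈ {x : ι → β | hammingDist x c ≤ d} | D y = D x}
            ≤ #{y : ι → β | ∀ i, y i ≠ c i ↔ i ∈ D x} := by
              refine card_le_card fun y hy => ?_
              simp only [mem_filter, mem_univ, true_and] at hy ⊢
              simp [← hy.2, D]
          _ ≤ _ := by
              rw [card_filter_forall_ne_iff_mem]
              exact Nat.pow_le_pow_right hq (mem_filter.1 hx).2
    _ ≤ (Fintype.card β - 1) ^ d * 2 ^ Fintype.card ι := by
        gcongr
        simpa using card_le_card (subset_univ (image D {x | hammingDist x c ≤ d}))

theorem exists_code_gilbert_varshamov [Nontrivial β] (d : ℕ) :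
    ∃ C : Finset (ι → β), (C : Set (ι → β)).Pairwise (fun x y => d < hammingDist x y) ∧
      Fintype.card β ^ Fintype.card ι ≤
        #C * ((Fintype.card β - 1) ^ d * 2 ^ Fintype.card ι) := by
  have : Std.Symm fun x y : ι → β => hammingDist x y ≤ d :=
    ⟨fun x y h => hammingDist_comm x y ▸ h⟩
  obtain ⟨C, -, hC, hcard⟩ := exists_pairwise_not_rel_card_le_mul
    (fun x y : ι → β => hammingDist x y ≤ d) univ (by simp) _ fun x _ => by
      simpa only [hammingDist_comm x] using card_hammingBall_le x d
  exact ⟨C, hC.mono' fun x y => Nat.lt_of_not_le, by simpa using hcard⟩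

end Hamming

section Graph

variable {ι β : Type*}

theorem graph_injective (c : ι → β) : Function.Injective fun i => (i, c i) :=
  fun _ _ h => (Prod.ext_iff.1 h).1

variable [Fintype ι] [DecidableEq ι] [DecidableEq β]

def graphFinset (c : ι → β) : Finset (ι × β) := univ.image fun i => (i, c i)

theorem mem_graphFinset {c : ι → β} {p : ι × β} : p ∈ graphFinset c ↔ c p.1 = p.2 := by
  simp [graphFinset, eq_comm, Prod.ext_iff]

theorem card_graphFinset (c : ι → β) : #(graphFinset c) = Fintype.card ι := by
  rw [graphFinset, card_image_of_injective _ (graph_injective c), card_univ]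

theorem card_graphFinset_inter_add_hammingDist (c c' : ι → β) :
    #(graphFinset c ∩ graphFinset c') + hammingDist c c' = Fintype.card ι := by
  have : graphFinset c ∩ graphFinset c' =
      ({i | c i = c' i} : Finset ι).image fun i => (i, c i) := by
    ext ⟨i, b⟩
    simp only [mem_inter, mem_graphFinset, mem_image, mem_filter, mem_univ, true_and,
      Prod.mk.injEq]
    constructor
    · rintro ⟨rfl, h⟩
      exact ⟨i, h.symm, rfl, rfl⟩
    · rintro ⟨i, h, rfl, rfl⟩
      exact ⟨rfl, h.symm⟩
  rw [this, card_image_of_injective _ (graph_injective c), hammingDist,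
    card_filter_add_card_filter_not, card_univ]

theorem graphFinset_injective :
    Function.Injective (graphFinset : (ι → β) → Finset (ι × β)) :=
  fun c _ h => funext fun i =>
    (mem_graphFinset.1 (h ▸ (mem_graphFinset (p := (i, c i))).2 rfl)).symm

end Graph

theorem sq_rpow_half {x : ℝ} (hx : 0 ≤ x) (n : ℕ) : (x ^ 2) ^ ((n : ℝ) / 2) = x ^ n := by
  rw [← Real.rpow_natCast x 2, ← Real.rpow_mul hx, ← Real.rpow_natCast]
  congr 1
  push_cast
  ring

theorem succ_div_four_rpow_le (q n M : ℕ) (hq : 2 ≤ q)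
    (hM : q ^ n ≤ M * ((q - 1) ^ (n / 2) * 2 ^ n)) :
    (((q : ℝ) + 1) / 4) ^ ((n : ℝ) / 2) ≤ M := by
  set t : ℝ := (n : ℝ) / 2
  have ht0 : 0 ≤ t := by positivity
  have hq' : (2 : ℝ) ≤ q := by exact_mod_cast hq
  have hM' : (q : ℝ) ^ n ≤ M * (((q : ℝ) - 1) ^ (n / 2) * 2 ^ n) := by
    have := Nat.cast_le (α := ℝ) |>.2 hM
    push_cast [Nat.cast_sub (by omega : 1 ≤ q)] at this
    exact this
  have h_floor : ((q : ℝ) - 1) ^ (n / 2) ≤ ((q : ℝ) - 1) ^ t := by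
    rw [← Real.rpow_natCast]
    exact Real.rpow_le_rpow_of_exponent_le (by linarith) (Nat.cast_div_le.trans_eq (by simp [t]))
  have h_four : (2 : ℝ) ^ n = 4 ^ t := by
    rw [show (4 : ℝ) = 2 ^ 2 by norm_num, sq_rpow_half zero_le_two]
  have key : (((q : ℝ) + 1) / 4) ^ t * (((q : ℝ) - 1) ^ (n / 2) * 2 ^ n) ≤ (q : ℝ) ^ n :=
    calc (((q : ℝ) + 1) / 4) ^ t * (((q : ℝ) - 1) ^ (n / 2) * 2 ^ n)
        ≤ (((q : ℝ) + 1) / 4) ^ t * (((q : ℝ) - 1) ^ t * 4 ^ t) := by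
          rw [h_four]
          exact mul_le_mul_of_nonneg_left (mul_le_mul_of_nonneg_right h_floor (by positivity))
            (by positivity)
      _ = ((q : ℝ) ^ 2 - 1) ^ t := by
          rw [← Real.mul_rpow (by linarith) (by norm_num),
            ← Real.mul_rpow (by positivity) (by linarith)]
          ring_nf
      _ ≤ ((q : ℝ) ^ 2) ^ t := Real.rpow_le_rpow (by nlinarith) (by linarith) ht0
      _ = (q : ℝ) ^ n := sq_rpow_half (by positivity) n
  exact le_of_mul_le_mul_right (key.trans hM')
    (mul_pos (pow_pos (by linarith) _) (by positivity))

theorem exists_family_of_code {ι β α : Type*} [Fintype ι] [DecidableEq ι] [DecidableEq β]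
    [DecidableEq α] (e : ι × β ↪ α) {C : Finset (ι → β)} {d : ℕ}
    (hC : (C : Set (ι → β)).Pairwise fun x y => d < hammingDist x y) :
    ∃ 𝒰 : Finset (Finset α), (∀ S ∈ 𝒰, #S = Fintype.card ι) ∧
      (∀ S ∈ 𝒰, ∀ T ∈ 𝒰, S ≠ T → #(S ∩ T) + d < Fintype.card ι) ∧ #𝒰 = #C := by
  have hinj : Function.Injective fun c : ι → β => (graphFinset c).map e :=
    (map_injective e).comp graphFinset_injective
  refine ⟨C.image fun c => (graphFinset c).map e, ?_, ?_, card_image_of_injective _ hinj⟩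
  · simp only [mem_image]
    rintro _ ⟨c, -, rfl⟩
    rw [card_map, card_graphFinset]
  · simp only [mem_image]
    rintro _ ⟨c, hc, rfl⟩ _ ⟨c', hc', rfl⟩ hne
    have hdist := hC hc hc' fun h => hne (h ▸ rfl)
    have := card_graphFinset_inter_add_hammingDist c c'
    rw [← map_inter, card_map]
    omega

theorem div_four_mul_rpow_le_one (n N : ℕ) (h : N / n < 4) :
    ((N : ℝ) / (4 * n)) ^ ((n : ℝ) / 2) ≤ 1 := by
  rcases n.eq_zero_or_pos with rfl | hn
  · simp
  have hN : (N : ℝ) ≤ 4 * n := by exact_mod_cast ((Nat.div_lt_iff_lt_mul hn).1 h).le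
  exact Real.rpow_le_one (by positivity) ((div_le_one (by positivity)).2 hN) (by positivity)

theorem div_four_mul_le_succ_div_div_four (n N : ℕ) (hn : 0 < n) :
    (N : ℝ) / (4 * n) ≤ (((N / n : ℕ) : ℝ) + 1) / 4 := by
  have hN : (N : ℝ) ≤ ((N / n : ℕ) + 1) * n := by
    exact_mod_cast (Nat.lt_div_mul_add hn).le.trans_eq (by ring)
  rw [div_le_div_iff₀ (by positivity) (by norm_num)]
  nlinarith

/-- **A large packing of `n`-subsets with small pairwise intersections**
(Foucart–Pajor–Rauhut–Ullrich, Lem. 2.3).  For `n < N` there is a family `𝒰` of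
`n`-element subsets of `{1,…,N}` with pairwise intersections of size `< n/2` and
`|𝒰| ≥ (N/(4n))^{n/2}`. -/
theorem stmt18 (n N : ℕ) (h : n < N) :
    ∃ 𝒰 : Finset (Finset (Fin N)),
      (∀ S ∈ 𝒰, S.card = n) ∧
      (∀ S ∈ 𝒰, ∀ T ∈ 𝒰, S ≠ T → ((S ∩ T).card : ℝ) < (n : ℝ) / 2) ∧
      ((N : ℝ) / (4 * n)) ^ ((n : ℝ) / 2) ≤ (𝒰.card : ℝ) := by
  rcases lt_or_ge (N / n) 4 with hq | hq
  · obtain ⟨S, -, hS⟩ :=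
      exists_subset_card_eq (show n ≤ #(univ : Finset (Fin N)) by simpa using h.le)
    refine ⟨{S}, by simpa using hS, by simp, by simpa using div_four_mul_rpow_le_one n N hq⟩
  have hn : 0 < n := Nat.pos_of_ne_zero fun hn => by simp [hn] at hq
  have : Nontrivial (Fin (N / n)) := Fin.nontrivial_iff_two_le.2 (by omega)
  obtain ⟨C, hC, hcount⟩ :=
    exists_code_gilbert_varshamov (ι := Fin n) (β := Fin (N / n)) (n / 2)
  obtain ⟨e⟩ : Nonempty (Fin n × Fin (N / n) ↪ Fin N) :=
    Function.Embedding.nonempty_of_card_le (by simpa [mul_comm] using Nat.div_mul_le_self N n)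
  obtain ⟨𝒰, hcard, hinter, h𝒰⟩ := exists_family_of_code e hC
  simp only [Fintype.card_fin] at hcard hinter hcount
  refine ⟨𝒰, hcard, fun S hS T hT hST => ?_, ?_⟩
  · have := hinter S hS T hT hST
    rw [lt_div_iff₀ two_pos]
    exact_mod_cast (by omega : #(S ∩ T) * 2 < n)
  · rw [h𝒰]
    exact (Real.rpow_le_rpow (by positivity) (div_four_mul_le_succ_div_div_four n N hn)
      (by positivity)).trans (succ_div_four_rpow_le _ n _ (by omega) hcount)
end
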